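/- Commutative ladder lemma: consider a commutative diagram of long exact sequences of finite-dimensional vector spaces ... → Aₗ → Bₗ → Cₗ → Aₗ₊₁ → ... and ... → A'ₗ → B'ₗ → C'ₗ → A'ₗ₊₁ → ... with vertical maps αₗ : Aₗ → A'ₗ, βₗ : Bₗ → B'ₗ, γₗ : Cₗ → C'ₗ. If every αₗ is an isomorphism and every βₗ and γₗ is injective, then for each l the induced map coker(βₗ) → coker(γₗ) is an isomorphism; in particular B'ₗ ≅ Bₗ ⊕ (C'ₗ / im γₗ). -/

import Mathlib

/-!
Two diagram chases do the work. If `g' b' = γ c`, then `δ c` dies under the injective `α₍ₗ₊₁₎`,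
so `c = g b` and `b' - β b ∈ ker g' = im f' = im (f' ∘ α) = β (im f)`: the kernel of
`coker β → coker γ` vanishes. Given `c'`, lift `δ' c'` along the surjective `α₍ₗ₊₁₎` to an `a`
killed by `f`, since `β₍ₗ₊₁₎` is injective; then `a = δ c` and `c' - γ c ∈ ker δ' = im g'`.
Over a field the injection `β` splits, which gives the direct sum decomposition.
-/

open Function LinearMap

section Ladder

variable {R : Type*} [Ring R]
  {A B C D E A' B' C' D' E' : Type*}
  [AddCommGroup A] [Module R A] [AddCommGroup B] [Module R B] [AddCommGroup C] [Module R C]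
  [AddCommGroup D] [Module R D] [AddCommGroup E] [Module R E]
  [AddCommGroup A'] [Module R A'] [AddCommGroup B'] [Module R B'] [AddCommGroup C'] [Module R C']
  [AddCommGroup D'] [Module R D'] [AddCommGroup E'] [Module R E']

theorem LinearMap.comap_range_le_range_of_ladder
    {f : A →ₗ[R] B} {g : B →ₗ[R] C} {δ : C →ₗ[R] D}
    {f' : A' →ₗ[R] B'} {g' : B' →ₗ[R] C'} {δ' : C' →ₗ[R] D'}
    {α : A →ₗ[R] A'} {β : B →ₗ[R] B'} {γ : C →ₗ[R] C'} {α₁ : D →ₗ[R] D'}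
    (hgδ : Exact g δ) (hf'g' : Exact f' g') (hg'δ' : δ' ∘ₗ g' = 0)
    (hsq1 : β ∘ₗ f = f' ∘ₗ α) (hsq2 : γ ∘ₗ g = g' ∘ₗ β) (hsq3 : α₁ ∘ₗ δ = δ' ∘ₗ γ)
    (hα : Surjective α) (hα₁ : Injective α₁) :
    (range γ).comap g' ≤ range β := by
  rintro b' ⟨c, hc⟩
  have hδc : δ c = 0 := hα₁ <| by
    rw [map_zero, ← comp_apply, hsq3, comp_apply, hc, ← comp_apply, hg'δ', zero_apply]
  obtain ⟨b, rfl⟩ := (hgδ c).mp hδc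
  have : g' (b' - β b) = 0 := by
    rw [map_sub, ← comp_apply g', ← hsq2, comp_apply, hc, sub_self]
  obtain ⟨a', ha'⟩ := (hf'g' _).mp this
  obtain ⟨a, rfl⟩ := hα a'
  refine ⟨b + f a, ?_⟩
  rw [map_add, ← comp_apply β, hsq1, comp_apply, ha', add_sub_cancel]

theorem LinearMap.range_sup_range_eq_top_of_ladder
    {δ : C →ₗ[R] D} {f₁ : D →ₗ[R] E}
    {g' : B' →ₗ[R] C'} {δ' : C' →ₗ[R] D'} {f₁' : D' →ₗ[R] E'}
    {γ : C →ₗ[R] C'} {α₁ : D →ₗ[R] D'} {β₁ : E →ₗ[R] E'}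
    (hδf₁ : Exact δ f₁) (hg'δ' : Exact g' δ') (hδ'f₁' : f₁' ∘ₗ δ' = 0)
    (hsq3 : α₁ ∘ₗ δ = δ' ∘ₗ γ) (hsq4 : β₁ ∘ₗ f₁ = f₁' ∘ₗ α₁)
    (hα₁ : Surjective α₁) (hβ₁ : Injective β₁) :
    range γ ⊔ range g' = ⊤ := by
  refine eq_top_iff.mpr fun c' _ => ?_
  obtain ⟨a, ha⟩ := hα₁ (δ' c')
  have hf₁a : f₁ a = 0 := hβ₁ <| by
    rw [map_zero, ← comp_apply, hsq4, comp_apply, ha, ← comp_apply, hδ'f₁', zero_apply]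
  obtain ⟨c, rfl⟩ := (hδf₁ a).mp hf₁a
  have : δ' (c' - γ c) = 0 := by
    rw [map_sub, ← comp_apply δ', ← hsq3, comp_apply, ha, sub_self]
  obtain ⟨b', hb'⟩ := (hg'δ' _).mp this
  exact Submodule.mem_sup.mpr ⟨γ c, mem_range_self γ c, g' b', mem_range_self g' b',
    by rw [hb', add_sub_cancel]⟩

end Ladder

theorem Submodule.bijective_mapQ_of_comap_le_of_sup_range_eq_top {R M N : Type*} [Ring R]
    [AddCommGroup M] [Module R M] [AddCommGroup N] [Module R N]
    {p : Submodule R M} {q : Submodule R N} {f : M →ₗ[R] N} (h : p ≤ q.comap f)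
    (hcomap : q.comap f ≤ p) (hsup : q ⊔ range f = ⊤) :
    Bijective (p.mapQ q f h) := by
  refine ⟨?_, ?_⟩
  · rw [← ker_eq_bot, ker_mapQ, le_antisymm hcomap h, Submodule.mkQ_map_self]
  · rw [← range_eq_top, range_mapQ, ← bot_sup_eq (map _ _), ← Submodule.mkQ_map_self q,
      ← Submodule.map_sup, hsup, Submodule.map_top, Submodule.range_mkQ]

theorem LinearMap.nonempty_equiv_prod_quotient_range {K V W : Type*} [DivisionRing K]
    [AddCommGroup V] [Module K V] [AddCommGroup W] [Module K W]
    {φ : V →ₗ[K] W} (hφ : Injective φ) :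
    Nonempty (W ≃ₗ[K] V × (W ⧸ range φ)) := by
  obtain ⟨q, hq⟩ := Submodule.exists_isCompl (range φ)
  exact ⟨(Submodule.prodEquivOfIsCompl _ q hq).symm.trans
    (LinearEquiv.prodCongr (LinearEquiv.ofInjective φ hφ).symm
      (Submodule.quotientEquivOfIsCompl _ q hq).symm)⟩

theorem commutative_ladder_coker_iso_general
    (A B C A' B' C' : ℤ → Type)
    [∀ l, AddCommGroup (A l)] [∀ l, Module ℂ (A l)]
    [∀ l, AddCommGroup (B l)] [∀ l, Module ℂ (B l)]
    [∀ l, AddCommGroup (C l)] [∀ l, Module ℂ (C l)]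
    [∀ l, AddCommGroup (A' l)] [∀ l, Module ℂ (A' l)]
    [∀ l, AddCommGroup (B' l)] [∀ l, Module ℂ (B' l)]
    [∀ l, AddCommGroup (C' l)] [∀ l, Module ℂ (C' l)]
    (f : ∀ l, A l →ₗ[ℂ] B l) (g : ∀ l, B l →ₗ[ℂ] C l) (δ : ∀ l, C l →ₗ[ℂ] A (l + 1))
    (f' : ∀ l, A' l →ₗ[ℂ] B' l) (g' : ∀ l, B' l →ₗ[ℂ] C' l) (δ' : ∀ l, C' l →ₗ[ℂ] A' (l + 1))
    (hex2 : ∀ l, Exact (g l) (δ l))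
    (hex3 : ∀ l, Exact (δ l) (f (l + 1)))
    (hex1' : ∀ l, Exact (f' l) (g' l)) (hex2' : ∀ l, Exact (g' l) (δ' l))
    (hex3' : ∀ l, Exact (δ' l) (f' (l + 1)))
    (α : ∀ l, A l →ₗ[ℂ] A' l) (β : ∀ l, B l →ₗ[ℂ] B' l) (γ : ∀ l, C l →ₗ[ℂ] C' l)
    (hsq1 : ∀ l, (β l).comp (f l) = (f' l).comp (α l))
    (hsq2 : ∀ l, (γ l).comp (g l) = (g' l).comp (β l))
    (hsq3 : ∀ l, (α (l + 1)).comp (δ l) = (δ' l).comp (γ l))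
    (hα : ∀ l, Bijective (α l)) (hβ : ∀ l, Injective (β l)) :
    ∀ l, (∀ hle : range (β l) ≤ (range (γ l)).comap (g' l),
        Bijective (Submodule.mapQ (range (β l)) (range (γ l)) (g' l) hle)) ∧
      Nonempty (B' l ≃ₗ[ℂ] B l × (C' l ⧸ range (γ l))) := by
  intro l
  have hle : range (β l) ≤ (range (γ l)).comap (g' l) := by
    rintro _ ⟨b, rfl⟩
    exact ⟨g l b, LinearMap.congr_fun (hsq2 l) b⟩
  have hbij := Submodule.bijective_mapQ_of_comap_le_of_sup_range_eq_top hle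
    (comap_range_le_range_of_ladder (hex2 l) (hex1' l) (hex2' l).linearMap_comp_eq_zero
      (hsq1 l) (hsq2 l) (hsq3 l) (hα l).surjective (hα (l + 1)).injective)
    (range_sup_range_eq_top_of_ladder (hex3 l) (hex2' l) (hex3' l).linearMap_comp_eq_zero
      (hsq3 l) (hsq1 (l + 1)) (hα (l + 1)).surjective (hβ (l + 1)))
  exact ⟨fun _ => hbij, (nonempty_equiv_prod_quotient_range (hβ l)).map
    (·.trans ((LinearEquiv.refl ℂ (B l)).prodCongr (LinearEquiv.ofBijective _ hbij)))⟩

/-- Commutative ladder lemma: given a commutative diagram of long exact sequences of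
finite-dimensional `ℂ`-vector spaces
`... → Aₗ → Bₗ → Cₗ → Aₗ₊₁ → ...` and `... → A'ₗ → B'ₗ → C'ₗ → A'ₗ₊₁ → ...`
with vertical maps `αₗ, βₗ, γₗ`, if every `αₗ` is an isomorphism and every `βₗ`, `γₗ`
is injective, then the induced map `coker (βₗ) → coker (γₗ)` is an isomorphism;
in particular `B'ₗ ≅ Bₗ ⊕ C'ₗ / im γₗ`. -/
theorem commutative_ladder_coker_iso
    (A B C A' B' C' : ℤ → Type)
    [∀ l, AddCommGroup (A l)] [∀ l, Module ℂ (A l)] [∀ l, FiniteDimensional ℂ (A l)]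
    [∀ l, AddCommGroup (B l)] [∀ l, Module ℂ (B l)] [∀ l, FiniteDimensional ℂ (B l)]
    [∀ l, AddCommGroup (C l)] [∀ l, Module ℂ (C l)] [∀ l, FiniteDimensional ℂ (C l)]
    [∀ l, AddCommGroup (A' l)] [∀ l, Module ℂ (A' l)] [∀ l, FiniteDimensional ℂ (A' l)]
    [∀ l, AddCommGroup (B' l)] [∀ l, Module ℂ (B' l)] [∀ l, FiniteDimensional ℂ (B' l)]
    [∀ l, AddCommGroup (C' l)] [∀ l, Module ℂ (C' l)] [∀ l, FiniteDimensional ℂ (C' l)]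
    (f : ∀ l, A l →ₗ[ℂ] B l) (g : ∀ l, B l →ₗ[ℂ] C l) (δ : ∀ l, C l →ₗ[ℂ] A (l + 1))
    (f' : ∀ l, A' l →ₗ[ℂ] B' l) (g' : ∀ l, B' l →ₗ[ℂ] C' l) (δ' : ∀ l, C' l →ₗ[ℂ] A' (l + 1))
    (hex1 : ∀ l, Exact (f l) (g l)) (hex2 : ∀ l, Exact (g l) (δ l))
    (hex3 : ∀ l, Exact (δ l) (f (l + 1)))
    (hex1' : ∀ l, Exact (f' l) (g' l)) (hex2' : ∀ l, Exact (g' l) (δ' l))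
    (hex3' : ∀ l, Exact (δ' l) (f' (l + 1)))
    (α : ∀ l, A l →ₗ[ℂ] A' l) (β : ∀ l, B l →ₗ[ℂ] B' l) (γ : ∀ l, C l →ₗ[ℂ] C' l)
    (hsq1 : ∀ l, (β l).comp (f l) = (f' l).comp (α l))
    (hsq2 : ∀ l, (γ l).comp (g l) = (g' l).comp (β l))
    (hsq3 : ∀ l, (α (l + 1)).comp (δ l) = (δ' l).comp (γ l))
    (hα : ∀ l, Bijective (α l)) (hβ : ∀ l, Injective (β l)) (hγ : ∀ l, Injective (γ l)) :
    ∀ l, (∀ hle : range (β l) ≤ (range (γ l)).comap (g' l),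
        Bijective (Submodule.mapQ (range (β l)) (range (γ l)) (g' l) hle)) ∧
      Nonempty (B' l ≃ₗ[ℂ] B l × (C' l ⧸ range (γ l))) :=
  commutative_ladder_coker_iso_general A B C A' B' C' f g δ f' g' δ' hex2 hex3 hex1' hex2' hex3' α β
    γ hsq1 hsq2 hsq3 hα hβ
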